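/- Let p be an odd prime and let M(p) be the p×p complex matrix with (j,k)-entry ζ^{j(k−j)}, where ζ = e^{2πi/p} and j, k run from 0 to p−1. Then M(p) is a complex Hadamard matrix: M(p)·conjugate(M(p))^T = conjugate(M(p))^T·M(p) = p·I, where I is the p×p identity matrix. In particular every eigenvalue λ of M(p) satisfies |λ| = √p. -/

import Mathlib

open Finset Matrix

/-- The `p×p` complex matrix `M(p)` with `(j,k)`-entry `ζ^{j(k−j)}`, where
`ζ = e^{2πi/p}` and `0 ≤ j, k ≤ p−1`. -/
noncomputable def Mmat (p : ℕ) : Matrix (Fin p) (Fin p) ℂ :=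
  fun j k => Complex.exp (2 * Real.pi * Complex.I / p) ^ ((j : ℤ) * ((k : ℤ) - (j : ℤ)))

/-- Let `p` be an odd prime.  Then `M(p)` is a complex Hadamard matrix:
`M(p)·M(p)ᴴ = M(p)ᴴ·M(p) = p·I`.  In particular every eigenvalue `λ` of `M(p)`
satisfies `|λ| = √p`. -/
theorem Mmat_complexHadamard (p : ℕ) (hp : p.Prime) (hodd : p ≠ 2) :
    Mmat p * (Mmat p)ᴴ = (p : ℂ) • (1 : Matrix (Fin p) (Fin p) ℂ) ∧
    (Mmat p)ᴴ * Mmat p = (p : ℂ) • (1 : Matrix (Fin p) (Fin p) ℂ) ∧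
    ∀ lam : ℂ, (∃ v : Fin p → ℂ, v ≠ 0 ∧ (Mmat p).mulVec v = lam • v) →
      ‖lam‖ = Real.sqrt p := by
  have hp0 : p ≠ 0 := hp.ne_zero
  set ζ : ℂ := Complex.exp (2 * Real.pi * Complex.I / p) with hζdef
  have hprim : IsPrimitiveRoot ζ p := Complex.isPrimitiveRoot_exp p hp0
  have hζ0 : ζ ≠ 0 := Complex.exp_ne_zero _
  have hζp : ζ ^ (p : ℤ) = 1 := by
    rw [zpow_natCast]; exact hprim.pow_eq_one
  have habs : ‖ζ‖ = 1 := hprim.norm'_eq_one hp0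
  have hconj : (starRingEnd ℂ) ζ = ζ⁻¹ := (Complex.inv_eq_conj habs).symm
  have hstar : ∀ n : ℤ, star (ζ ^ n) = ζ ^ (-n) := by
    intro n
    show (starRingEnd ℂ) (ζ ^ n) = ζ ^ (-n)
    rw [map_zpow₀, hconj, _root_.inv_zpow']
  -- key cancellation: nontrivial character sums vanish
  have key : ∀ d : ℤ, ¬ ((p : ℤ) ∣ d) → ∑ k : Fin p, ζ ^ (d * (k : ℤ)) = 0 := by
    intro d hd
    have hw1 : ζ ^ d ≠ 1 := fun h => hd ((hprim.zpow_eq_one_iff_dvd d).mp h)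
    have hwp : (ζ ^ d) ^ p = 1 := by
      rw [← zpow_natCast (ζ ^ d), ← _root_.zpow_mul, mul_comm, _root_.zpow_mul, hζp, _root_.one_zpow]
    have h0 : ∑ k : Fin p, (ζ ^ d) ^ (k : ℕ) = 0 := by
      rw [Fin.sum_univ_eq_sum_range (fun k => (ζ ^ d) ^ k), geom_sum_eq hw1, hwp]
      simp
    calc ∑ k : Fin p, ζ ^ (d * (k : ℤ)) = ∑ k : Fin p, (ζ ^ d) ^ (k : ℕ) := by
          refine Finset.sum_congr rfl fun k _ => ?_
          rw [_root_.zpow_mul, zpow_natCast]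
      _ = 0 := h0
  have hnd : ∀ a b : Fin p, a ≠ b → ¬ ((p : ℤ) ∣ ((a : ℤ) - (b : ℤ))) := by
    intro a b hab hdvd
    have ha := a.isLt; have hb := b.isLt
    have h0 : (a : ℤ) - (b : ℤ) ≠ 0 := by
      intro h
      exact hab (Fin.ext (by omega))
    have h1 := Int.le_of_dvd (abs_pos.mpr h0) ((dvd_abs _ _).mpr hdvd)
    have h2 : |((a : ℤ) - (b : ℤ))| < p := by
      rw [abs_lt]; omega
    omega
  have hMMH : Mmat p * (Mmat p)ᴴ = (p : ℂ) • (1 : Matrix (Fin p) (Fin p) ℂ) := by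
    ext j j'
    simp only [mul_apply, conjTranspose_apply, Mmat, Matrix.smul_apply, one_apply, smul_eq_mul]
    by_cases h : j = j'
    · subst h
      have h1 : ∀ k : Fin p, ζ ^ ((j : ℤ) * ((k : ℤ) - (j : ℤ))) *
          star (ζ ^ ((j : ℤ) * ((k : ℤ) - (j : ℤ)))) = 1 := by
        intro k
        rw [hstar, ← zpow_add₀ hζ0]
        simp
      rw [Finset.sum_congr rfl (fun k _ => h1 k), Finset.sum_const, card_univ, Fintype.card_fin]
      simp
    · have h1 : ∀ k : Fin p, ζ ^ ((j : ℤ) * ((k : ℤ) - (j : ℤ))) *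
          star (ζ ^ ((j' : ℤ) * ((k : ℤ) - (j' : ℤ)))) =
          ζ ^ (-((((j : ℤ)) - j') * ((j : ℤ) + j'))) * ζ ^ ((((j : ℤ)) - j') * (k : ℤ)) := by
        intro k
        rw [hstar, ← zpow_add₀ hζ0, ← zpow_add₀ hζ0]
        ring_nf
      rw [Finset.sum_congr rfl (fun k _ => h1 k), ← Finset.mul_sum,
        key _ (hnd j j' h), mul_zero, if_neg h, mul_zero]
  have hMHM : (Mmat p)ᴴ * Mmat p = (p : ℂ) • (1 : Matrix (Fin p) (Fin p) ℂ) := by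
    ext k k'
    simp only [mul_apply, conjTranspose_apply, Mmat, Matrix.smul_apply, one_apply, smul_eq_mul]
    by_cases h : k = k'
    · subst h
      have h1 : ∀ j : Fin p, star (ζ ^ ((j : ℤ) * ((k : ℤ) - (j : ℤ)))) *
          ζ ^ ((j : ℤ) * ((k : ℤ) - (j : ℤ))) = 1 := by
        intro j
        rw [hstar, ← zpow_add₀ hζ0]
        simp
      rw [Finset.sum_congr rfl (fun j _ => h1 j), Finset.sum_const, card_univ, Fintype.card_fin]
      simp
    · have h1 : ∀ j : Fin p, star (ζ ^ ((j : ℤ) * ((k : ℤ) - (j : ℤ)))) *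
          ζ ^ ((j : ℤ) * ((k' : ℤ) - (j : ℤ))) =
          ζ ^ ((((k' : ℤ)) - k) * (j : ℤ)) := by
        intro j
        rw [hstar, ← zpow_add₀ hζ0]
        ring_nf
      rw [Finset.sum_congr rfl (fun j _ => h1 j), key _ (hnd k' k (fun e => h e.symm)),
        if_neg h, mul_zero]
  refine ⟨hMMH, hMHM, ?_⟩
  rintro lam ⟨v, hv0, hv⟩
  have hc : star v ⬝ᵥ v ≠ 0 := by
    intro h
    open scoped ComplexOrder in
    exact hv0 (dotProduct_star_self_eq_zero.mp h)
  have hmain : (starRingEnd ℂ) lam * lam * (star v ⬝ᵥ v) = (p : ℂ) * (star v ⬝ᵥ v) := by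
    have h1 : star ((Mmat p) *ᵥ v) ⬝ᵥ ((Mmat p) *ᵥ v) = star v ⬝ᵥ ((Mmat p)ᴴ * Mmat p) *ᵥ v := by
      rw [star_mulVec, ← dotProduct_mulVec, mulVec_mulVec]
    rw [hv, hMHM] at h1
    simpa [dotProduct_smul, smul_dotProduct, star_smul, smul_eq_mul, mul_assoc,
      Matrix.smul_mulVec, one_mulVec, mul_comm, mul_left_comm] using h1
  have hlam : (starRingEnd ℂ) lam * lam = (p : ℂ) := mul_right_cancel₀ hc hmain
  have hnsq : Complex.normSq lam = p := by
    have h2 := Complex.mul_conj lam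
    rw [mul_comm] at h2
    rw [h2] at hlam
    exact_mod_cast hlam
  rw [Complex.norm_def, hnsq]
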